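/- arXiv:2305.16395 — 3 statements merged into one kernel-verified Lean document; each statement's English description precedes it below -/
import Mathlib

section
/- Consider the Knapsack Problem with weights w ∈ (ℤ_{≥0})^n, values v ∈ (ℤ_{≥0})^n, and capacity W ∈ ℤ_{≥0}. Let N_s ∈ ℕ satisfy 2^{N_s} − 1 ≥ W, and let λ₀ be a real with λ₀ > Σ_{i=1}^n v_i. Define, for x ∈ {0,1}^n and s ∈ {0,1}^{N_s}, F(x,s) = Σ_{i=1}^n v_i x_i − λ₀ (Σ_{i=1}^n w_i x_i − W + Σ_{k=1}^{N_s} 2^{k−1} s_k)². Then max_{x,s} F(x,s) equals the optimal value of the Knapsack Problem, i.e., max { Σ_i v_i x_i : x ∈ {0,1}^n, Σ_i w_i x_i ≤ W }, and for every maximizer (x*, s*) of F, the vector x* is a feasible optimal solution of the Knapsack Problem. -/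
def kpSlackObj (n Ns : ℕ) (w v : Fin n → ℕ) (W : ℕ) (lam : ℝ)
    (x : Fin n → ℕ) (s : Fin Ns → ℕ) : ℝ :=
  (∑ i, (v i : ℝ) * x i)
    - lam * ((∑ i, (w i : ℝ) * x i) - W + ∑ k : Fin Ns, (2 : ℝ) ^ (k : ℕ) * s k) ^ 2

lemma bits_exist : ∀ (Ns m : ℕ), m < 2 ^ Ns →
    ∃ s : Fin Ns → ℕ, (∀ k, s k ≤ 1) ∧ (∑ k : Fin Ns, 2 ^ (k : ℕ) * s k) = m := by
  intro Ns
  induction Ns with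
  | zero =>
    intro m h
    exact ⟨fun _ => 0, fun k => by simp, by simpa using (by omega : 0 = m)⟩
  | succ N ih =>
    intro m h
    have h2 : m / 2 < 2 ^ N := by
      have : m < 2 ^ N * 2 := by rw [pow_succ] at h; exact h
      omega
    obtain ⟨s', h1, hsum⟩ := ih (m / 2) h2
    refine ⟨Fin.cons (m % 2) s', ?_, ?_⟩
    · intro k
      refine Fin.cases ?_ ?_ k
      · simpa using (by omega : m % 2 ≤ 1)
      · intro i; simpa using h1 i
    · rw [Fin.sum_univ_succ]
      simp only [Fin.cons_zero, Fin.cons_succ, Fin.val_succ, Fin.val_zero, pow_zero, one_mul,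
        pow_succ]
      have : (∑ i : Fin N, 2 ^ (i : ℕ) * 2 * s' i) = 2 * ∑ i : Fin N, 2 ^ (i : ℕ) * s' i := by
        rw [Finset.mul_sum]; congr 1; ext i; ring
      rw [this, hsum]
      omega

lemma obj_cast (n Ns : ℕ) (w v : Fin n → ℕ) (W : ℕ) (lam : ℝ)
    (x : Fin n → ℕ) (s : Fin Ns → ℕ) :
    kpSlackObj n Ns w v W lam x s =
      ((∑ i, v i * x i : ℕ) : ℝ)
        - lam * ((((∑ i, w i * x i : ℕ) : ℤ) + ((∑ k : Fin Ns, 2 ^ (k : ℕ) * s k : ℕ) : ℤ)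
            - (W : ℤ) : ℤ) : ℝ) ^ 2 := by
  unfold kpSlackObj
  push_cast
  ring

/-- **Exactness of the log-encoded slack QUBO for the Knapsack Problem.**
If `2^{N_s} − 1 ≥ W` and `λ₀ > Σ_i v_i`, then the maximum of `F(x,s)` over
binary `x ∈ {0,1}^n` and slack bits `s ∈ {0,1}^{N_s}` equals the optimal value
of the Knapsack Problem, and for every maximizer `(x*, s*)` the vector `x*` is
a feasible optimal solution of the Knapsack Problem. -/
theorem kp_slack_qubo_exact
    (n : ℕ) (w v : Fin n → ℕ) (W : ℕ) (Ns : ℕ)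
    (hNs : W ≤ 2 ^ Ns - 1)
    (lam : ℝ) (hlam : (∑ i, (v i : ℝ)) < lam) :
    (∀ M : ℝ,
      IsGreatest {t : ℝ | ∃ x : Fin n → ℕ, (∀ i, x i ≤ 1) ∧
          (∑ i, w i * x i) ≤ W ∧ t = ∑ i, (v i : ℝ) * x i} M
      ↔ IsGreatest {t : ℝ | ∃ (x : Fin n → ℕ) (s : Fin Ns → ℕ),
          (∀ i, x i ≤ 1) ∧ (∀ k, s k ≤ 1) ∧ t = kpSlackObj n Ns w v W lam x s} M)
    ∧ (∀ (x : Fin n → ℕ) (s : Fin Ns → ℕ), (∀ i, x i ≤ 1) → (∀ k, s k ≤ 1) →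
        (∀ (x' : Fin n → ℕ) (s' : Fin Ns → ℕ), (∀ i, x' i ≤ 1) → (∀ k, s' k ≤ 1) →
          kpSlackObj n Ns w v W lam x' s' ≤ kpSlackObj n Ns w v W lam x s) →
        ((∑ i, w i * x i) ≤ W ∧
          ∀ x' : Fin n → ℕ, (∀ i, x' i ≤ 1) → (∑ i, w i * x' i) ≤ W →
            (∑ i, (v i : ℝ) * x' i) ≤ ∑ i, (v i : ℝ) * x i)) := by
  have h2pow : (1 : ℕ) ≤ 2 ^ Ns := Nat.one_le_two_pow
  -- embedding: any feasible x yields slack s with zero penalty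
  have embed : ∀ x : Fin n → ℕ, (∑ i, w i * x i) ≤ W →
      ∃ s : Fin Ns → ℕ, (∀ k, s k ≤ 1) ∧
        kpSlackObj n Ns w v W lam x s = ∑ i, (v i : ℝ) * x i := by
    intro x hx
    obtain ⟨s, hs1, hs2⟩ := bits_exist Ns (W - ∑ i, w i * x i) (by omega)
    refine ⟨s, hs1, ?_⟩
    rw [obj_cast, hs2]
    have : (((∑ i, w i * x i : ℕ) : ℤ) + ((W - ∑ i, w i * x i : ℕ) : ℤ) - (W : ℤ)) = 0 := by
      omega
    rw [this]
    push_cast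
    ring
  -- value bound: ∑ v x ≤ ∑ v for binary x
  have vbound : ∀ x : Fin n → ℕ, (∀ i, x i ≤ 1) →
      (∑ i, (v i : ℝ) * x i) ≤ ∑ i, (v i : ℝ) := by
    intro x hx
    apply Finset.sum_le_sum
    intro i _
    have h1 : ((x i : ℝ)) ≤ 1 := by exact_mod_cast hx i
    have h0 : (0 : ℝ) ≤ v i := Nat.cast_nonneg _
    nlinarith
  -- key dichotomy
  have key : ∀ (x : Fin n → ℕ) (s : Fin Ns → ℕ), (∀ i, x i ≤ 1) → (∀ k, s k ≤ 1) →
      ((∑ i, w i * x i) ≤ W ∧ kpSlackObj n Ns w v W lam x s = ∑ i, (v i : ℝ) * x i)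
      ∨ kpSlackObj n Ns w v W lam x s < 0 := by
    intro x s hx hs
    set D : ℤ := ((∑ i, w i * x i : ℕ) : ℤ) + ((∑ k : Fin Ns, 2 ^ (k : ℕ) * s k : ℕ) : ℤ) - (W : ℤ)
      with hD
    rcases eq_or_ne D 0 with h0 | h0
    · left
      constructor
      · omega
      · rw [obj_cast, ← hD, h0]
        push_cast
        ring
    · right
      rw [obj_cast, ← hD]
      have h1 : (1 : ℝ) ≤ ((D : ℝ)) ^ 2 := by
        have : (1 : ℤ) ≤ D ^ 2 := by
          have := Int.one_le_abs (by simpa using h0)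
          nlinarith [sq_abs D]
        exact_mod_cast this
      have h2 : ((∑ i, v i * x i : ℕ) : ℝ) ≤ ∑ i, (v i : ℝ) := by
        have := vbound x hx
        push_cast
        convert this using 2
      have hlampos : 0 < lam := lt_of_le_of_lt (Finset.sum_nonneg fun i _ => Nat.cast_nonneg _) hlam
      nlinarith
  constructor
  · intro M
    constructor
    · rintro ⟨⟨x, hx, hfeas, hM⟩, hub⟩
      constructor
      · obtain ⟨s, hs1, hs2⟩ := embed x hfeas
        exact ⟨x, s, hx, hs1, by rw [hs2, hM]⟩
      · rintro t ⟨x', s', hx', hs', ht⟩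
        rcases key x' s' hx' hs' with ⟨hf, heq⟩ | hneg
        · exact ht ▸ heq ▸ hub ⟨x', hx', hf, rfl⟩
        · have h0 : (0 : ℝ) ∈ {t : ℝ | ∃ x : Fin n → ℕ, (∀ i, x i ≤ 1) ∧
              (∑ i, w i * x i) ≤ W ∧ t = ∑ i, (v i : ℝ) * x i} := by
            exact ⟨fun _ => 0, fun i => by simp, by simp, by simp⟩
          have := hub h0
          linarith [ht ▸ hneg]
    · rintro ⟨⟨x, s, hx, hs, hM⟩, hub⟩
      have hub' : ∀ x' : Fin n → ℕ, (∀ i, x' i ≤ 1) → (∑ i, w i * x' i) ≤ W →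
          (∑ i, (v i : ℝ) * x' i) ≤ M := by
        intro x' hx' hf
        obtain ⟨s', hs1', hs2'⟩ := embed x' hf
        rw [← hs2']
        exact hub ⟨x', s', hx', hs1', rfl⟩
      constructor
      · rcases key x s hx hs with ⟨hf, heq⟩ | hneg
        · exact ⟨x, hx, hf, by rw [hM, heq]⟩
        · exfalso
          have h0 := hub' (fun _ => 0) (fun i => by simp) (by simp)
          simp only [Nat.cast_zero, mul_zero, Finset.sum_const_zero] at h0
          linarith [hM ▸ hneg]
      · rintro t ⟨x', hx', hf', ht⟩
        exact ht ▸ hub' x' hx' hf'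
  · intro x s hx hs hmax
    -- F(x,s) ≥ 0 since F(0, s_W) = 0
    have hge : 0 ≤ kpSlackObj n Ns w v W lam x s := by
      obtain ⟨s0, hs01, hs02⟩ := embed (fun _ => 0) (by simp)
      have := hmax (fun _ => 0) s0 (fun i => by simp) hs01
      rw [hs02] at this
      simpa using this
    rcases key x s hx hs with ⟨hf, heq⟩ | hneg
    · refine ⟨hf, ?_⟩
      intro x' hx' hf'
      obtain ⟨s', hs1', hs2'⟩ := embed x' hf'
      have := hmax x' s' hx' hs1'
      rw [hs2', heq] at this
      exact this
    · linarith
end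

section
/- Consider the Knapsack Problem with weights w ∈ (ℤ_{≥0})^n, values v ∈ (ℤ_{≥0})^n, and capacity W ∈ ℤ_{≥1}, and suppose there exists x ∈ {0,1}^n with 1 ≤ Σ_i w_i x_i ≤ W. Let λ₀, λ₁ be reals with λ₀ > Σ_{i=1}^n v_i and λ₁ > Σ_{i=1}^n v_i. Define, for x ∈ {0,1}^n and s ∈ {0,1}^W, G(x,s) = Σ_{i=1}^n v_i x_i − λ₀ (Σ_{i=1}^n w_i x_i − Σ_{k=1}^W k·s_k)² − λ₁ (1 − Σ_{k=1}^W s_k)². Then max_{x,s} G(x,s) = max { Σ_i v_i x_i : x ∈ {0,1}^n, 1 ≤ Σ_i w_i x_i ≤ W }, and for every maximizer (x*, s*) of G, the vector x* attains this maximum (in particular Σ_i w_i x*_i ≤ W). -/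
/-- The one-hot slack QUBO objective for the Knapsack Problem:
`G(x,s) = Σ_i v_i x_i − λ₀ (Σ_i w_i x_i − Σ_{k=1}^W k·s_k)² − λ₁ (1 − Σ_{k=1}^W s_k)²`,
with `W` slack bits `s_k` (the `Fin W` index `k` corresponds to slack index `k+1`). -/
def kpOneHotObj (n W : ℕ) (w v : Fin n → ℕ) (lam0 lam1 : ℝ)
    (x : Fin n → ℕ) (s : Fin W → ℕ) : ℝ :=
  (∑ i, (v i : ℝ) * x i)
    - lam0 * ((∑ i, (w i : ℝ) * x i) - ∑ k : Fin W, ((k : ℕ) + 1 : ℝ) * s k) ^ 2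
    - lam1 * (1 - ∑ k : Fin W, (s k : ℝ)) ^ 2


private lemma one_le_sq_of_int {a b : ℕ} (h : a ≠ b) : (1:ℝ) ≤ ((a:ℝ) - b)^2 := by
  have hz : ((a:ℤ) - b) ≠ 0 := by
    intro hc; apply h; omega
  have h1 : (1:ℤ) ≤ ((a:ℤ) - b)^2 := by
    rcases lt_or_gt_of_ne hz with h' | h' <;> nlinarith
  calc (1:ℝ) ≤ (((a:ℤ) - b : ℤ) : ℝ)^2 := by exact_mod_cast h1
    _ = ((a:ℝ) - b)^2 := by push_cast; ring

private lemma one_le_sq_of_int' {c : ℕ} (h : c ≠ 1) : (1:ℝ) ≤ (1 - (c:ℝ))^2 := by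
  have := one_le_sq_of_int (a := 1) (b := c) (by omega)
  calc (1:ℝ) ≤ ((1:ℕ) - (c:ℝ))^2 := this
    _ = (1 - (c:ℝ))^2 := by norm_num

private lemma key_sums (n W : ℕ) (w v : Fin n → ℕ) (lam0 lam1 : ℝ)
    (x : Fin n → ℕ) (s : Fin W → ℕ) :
    kpOneHotObj n W w v lam0 lam1 x s
      = (∑ i, (v i : ℝ) * x i)
        - lam0 * (((∑ i, w i * x i : ℕ) : ℝ) - ((∑ k : Fin W, ((k:ℕ)+1) * s k : ℕ) : ℝ))^2
        - lam1 * (1 - ((∑ k : Fin W, s k : ℕ) : ℝ))^2 := by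
  unfold kpOneHotObj
  push_cast
  ring

private lemma sum_vx_le (n : ℕ) (v : Fin n → ℕ) (x : Fin n → ℕ) (hx : ∀ i, x i ≤ 1) :
    ∑ i, (v i : ℝ) * x i ≤ ∑ i, (v i : ℝ) := by
  apply Finset.sum_le_sum
  intro i _
  have h1 : (x i : ℝ) ≤ 1 := by exact_mod_cast hx i
  have h0 : (0:ℝ) ≤ v i := Nat.cast_nonneg _
  nlinarith

private lemma sum_vx_nonneg (n : ℕ) (v : Fin n → ℕ) (x : Fin n → ℕ) :
    (0:ℝ) ≤ ∑ i, (v i : ℝ) * x i :=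
  Finset.sum_nonneg fun i _ => mul_nonneg (Nat.cast_nonneg _) (Nat.cast_nonneg _)

private lemma obj_eq_of_feasible (n W : ℕ) (w v : Fin n → ℕ) (lam0 lam1 : ℝ) (hW : 1 ≤ W)
    (x : Fin n → ℕ) (h1 : 1 ≤ ∑ i, w i * x i) (h2 : (∑ i, w i * x i) ≤ W) :
    ∃ s : Fin W → ℕ, (∀ k, s k ≤ 1) ∧
      kpOneHotObj n W w v lam0 lam1 x s = ∑ i, (v i : ℝ) * x i := by
  set m := ∑ i, w i * x i with hm
  have hlt : m - 1 < W := by omega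
  set k₀ : Fin W := ⟨m - 1, hlt⟩ with hk0
  refine ⟨fun k => if k = k₀ then 1 else 0, fun k => by dsimp only; split <;> omega, ?_⟩
  have hb : ∑ k : Fin W, ((k:ℕ)+1) * (if k = k₀ then 1 else 0) = m := by
    rw [Finset.sum_eq_single k₀]
    · simp [hk0]; omega
    · intro b _ hb; simp [hb]
    · intro h; exact absurd (Finset.mem_univ k₀) h
  have hc : ∑ k : Fin W, (if k = k₀ then 1 else 0) = 1 := by
    rw [Finset.sum_eq_single k₀]
    · simp
    · intro b _ hb; simp [hb]
    · intro h; exact absurd (Finset.mem_univ k₀) h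
  rw [key_sums, hb, hc, ← hm]
  simp

private lemma obj_dichotomy (n W : ℕ) (w v : Fin n → ℕ) (lam0 lam1 : ℝ)
    (hlam0 : (∑ i, (v i : ℝ)) < lam0) (hlam1 : (∑ i, (v i : ℝ)) < lam1)
    (x : Fin n → ℕ) (s : Fin W → ℕ) (hx : ∀ i, x i ≤ 1) (hs : ∀ k, s k ≤ 1) :
    (1 ≤ ∑ i, w i * x i ∧ (∑ i, w i * x i) ≤ W ∧
      kpOneHotObj n W w v lam0 lam1 x s = ∑ i, (v i : ℝ) * x i)
    ∨ kpOneHotObj n W w v lam0 lam1 x s < 0 := by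
  set a := ∑ i, w i * x i with ha
  set b := ∑ k : Fin W, ((k:ℕ)+1) * s k with hbdef
  set c := ∑ k : Fin W, s k with hcdef
  have hvle := sum_vx_le n v x hx
  have hv0 : (0:ℝ) ≤ ∑ i, (v i : ℝ) := Finset.sum_nonneg fun i _ => Nat.cast_nonneg _
  have hG := key_sums n W w v lam0 lam1 x s
  rw [← ha, ← hbdef, ← hcdef] at hG
  by_cases hab : a = b
  · by_cases hc1 : c = 1
    · left
      have hbc : c ≤ b := by
        rw [hbdef, hcdef]
        exact Finset.sum_le_sum fun k _ => Nat.le_mul_of_pos_left _ (by omega)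
      have hbW : b ≤ W := by
        calc b ≤ ∑ k : Fin W, W * s k := by
                exact Finset.sum_le_sum fun k _ =>
                  Nat.mul_le_mul_right _ (by omega)
          _ = W * c := by rw [hcdef, Finset.mul_sum]
          _ = W := by rw [hc1, mul_one]
      refine ⟨by omega, by omega, ?_⟩
      rw [hG, hab, hc1]
      simp
    · right
      have hsq := one_le_sq_of_int' hc1
      have hsq0 : (0:ℝ) ≤ ((a:ℝ) - b)^2 := sq_nonneg _
      rw [hG, hab]
      nlinarith
  · right
    have hsq := one_le_sq_of_int hab
    have hsq0 : (0:ℝ) ≤ (1 - (c:ℝ))^2 := sq_nonneg _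
    rw [hG]
    nlinarith

/-- **Exactness of the one-hot slack QUBO for the Knapsack Problem.**
Suppose `W ≥ 1`, some binary `x` has total weight in `{1, …, W}`, and
`λ₀, λ₁ > Σ_i v_i`.  Then the maximum of `G(x,s)` over binary `x ∈ {0,1}^n` and
slack bits `s ∈ {0,1}^W` equals `max {Σ_i v_i x_i : x ∈ {0,1}^n, 1 ≤ Σ_i w_i x_i ≤ W}`,
and every maximizer `(x*, s*)` of `G` has `x*` attaining this maximum
(in particular `Σ_i w_i x*_i ≤ W`). -/
theorem kp_onehot_qubo_exact
    (n : ℕ) (w v : Fin n → ℕ) (W : ℕ) (hW : 1 ≤ W)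
    (hfeas : ∃ x : Fin n → ℕ, (∀ i, x i ≤ 1) ∧ 1 ≤ ∑ i, w i * x i ∧ (∑ i, w i * x i) ≤ W)
    (lam0 lam1 : ℝ)
    (hlam0 : (∑ i, (v i : ℝ)) < lam0) (hlam1 : (∑ i, (v i : ℝ)) < lam1) :
    (∀ M : ℝ,
      IsGreatest {t : ℝ | ∃ x : Fin n → ℕ, (∀ i, x i ≤ 1) ∧
          1 ≤ ∑ i, w i * x i ∧ (∑ i, w i * x i) ≤ W ∧ t = ∑ i, (v i : ℝ) * x i} M
      ↔ IsGreatest {t : ℝ | ∃ (x : Fin n → ℕ) (s : Fin W → ℕ),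
          (∀ i, x i ≤ 1) ∧ (∀ k, s k ≤ 1) ∧ t = kpOneHotObj n W w v lam0 lam1 x s} M)
    ∧ (∀ (x : Fin n → ℕ) (s : Fin W → ℕ), (∀ i, x i ≤ 1) → (∀ k, s k ≤ 1) →
        (∀ (x' : Fin n → ℕ) (s' : Fin W → ℕ), (∀ i, x' i ≤ 1) → (∀ k, s' k ≤ 1) →
          kpOneHotObj n W w v lam0 lam1 x' s' ≤ kpOneHotObj n W w v lam0 lam1 x s) →
        (1 ≤ ∑ i, w i * x i ∧ (∑ i, w i * x i) ≤ W ∧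
          ∀ x' : Fin n → ℕ, (∀ i, x' i ≤ 1) →
            1 ≤ ∑ i, w i * x' i → (∑ i, w i * x' i) ≤ W →
              (∑ i, (v i : ℝ) * x' i) ≤ ∑ i, (v i : ℝ) * x i)) := by
  obtain ⟨x₀, hx₀, h1₀, h2₀⟩ := hfeas
  obtain ⟨s₀, hs₀, hG₀⟩ := obj_eq_of_feasible n W w v lam0 lam1 hW x₀ h1₀ h2₀
  have ht₀ : (0:ℝ) ≤ ∑ i, (v i : ℝ) * x₀ i := sum_vx_nonneg n v x₀
  constructor
  · intro M
    constructor
    · rintro ⟨⟨xm, hxm, h1m, h2m, hMeq⟩, hub⟩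
      obtain ⟨sm, hsm, hGm⟩ := obj_eq_of_feasible n W w v lam0 lam1 hW xm h1m h2m
      constructor
      · exact ⟨xm, sm, hxm, hsm, by rw [hGm, hMeq]⟩
      · rintro t ⟨x, s, hx, hs, ht⟩
        rcases obj_dichotomy n W w v lam0 lam1 hlam0 hlam1 x s hx hs with
          ⟨ha1, ha2, hGeq⟩ | hneg
        · exact ht ▸ hGeq ▸ hub ⟨x, hx, ha1, ha2, rfl⟩
        · have hM0 : (∑ i, (v i : ℝ) * x₀ i) ≤ M := hub ⟨x₀, hx₀, h1₀, h2₀, rfl⟩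
          rw [ht]; linarith
    · rintro ⟨⟨xm, sm, hxm, hsm, hMeq⟩, hub⟩
      have hM0 : (∑ i, (v i : ℝ) * x₀ i) ≤ M := by
        apply hub; exact ⟨x₀, s₀, hx₀, hs₀, hG₀.symm⟩
      rcases obj_dichotomy n W w v lam0 lam1 hlam0 hlam1 xm sm hxm hsm with
        ⟨ha1, ha2, hGeq⟩ | hneg
      · constructor
        · exact ⟨xm, hxm, ha1, ha2, by rw [hMeq, hGeq]⟩
        · rintro t ⟨x, hx, h1, h2, ht⟩
          obtain ⟨s, hs, hGeq'⟩ := obj_eq_of_feasible n W w v lam0 lam1 hW x h1 h2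
          exact hub ⟨x, s, hx, hs, by rw [hGeq', ht]⟩
      · exfalso; rw [hMeq] at hM0; linarith
  · intro x s hx hs hmax
    have hGlb : (∑ i, (v i : ℝ) * x₀ i) ≤ kpOneHotObj n W w v lam0 lam1 x s := by
      rw [← hG₀]; exact hmax x₀ s₀ hx₀ hs₀
    rcases obj_dichotomy n W w v lam0 lam1 hlam0 hlam1 x s hx hs with
      ⟨ha1, ha2, hGeq⟩ | hneg
    · refine ⟨ha1, ha2, ?_⟩
      intro x' hx' h1' h2'
      obtain ⟨s', hs', hGeq'⟩ := obj_eq_of_feasible n W w v lam0 lam1 hW x' h1' h2'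
      rw [← hGeq, ← hGeq']
      exact hmax x' s' hx' hs'
    · exfalso; linarith
end

section
/- Let a > 0 and L > 0 be real numbers, let B ≥ 1 be an integer, M = 2^B − 1, and suppose L·M/a ≥ 1. Set n = ⌊log₂(L·M/a)⌋. Then for every x ∈ {0,1}^n, the truncated binarized allocation satisfies ((Σ_{b=1}^{n} 2^{b−1} x_b)/M) · a ≤ L. Hence restricting the allocation of an asset with available quantity a to a bitstring of length n = ⌊log₂(L·M/a)⌋ guarantees that the allocated quantity never exceeds the limit L, for every assignment of the bits. -/
open Finset

theorem two_pow_le_of_natCast_eq_floor_logb {t : ℝ} (ht : 0 < t) {n : ℕ}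
    (hn : (n : ℤ) = ⌊Real.logb 2 t⌋) : (2 : ℝ) ^ n ≤ t := by
  have hlog : (n : ℤ) = Int.log 2 t := by
    simpa using hn.trans (Real.floor_logb_natCast (b := 2) ht.le)
  simpa [← hlog] using Int.zpow_log_le_self (b := 2) one_lt_two ht

theorem sum_two_pow_mul_lt_two_pow_of_le_one {n : ℕ} (x : Fin n → ℕ) (hx : ∀ b, x b ≤ 1) :
    ∑ b : Fin n, (2 : ℝ) ^ (b : ℕ) * x b < 2 ^ n :=
  calc ∑ b : Fin n, (2 : ℝ) ^ (b : ℕ) * x b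
      ≤ ∑ b : Fin n, (2 : ℝ) ^ (b : ℕ) :=
        sum_le_sum fun b _ => mul_le_of_le_one_right (by positivity) (by exact_mod_cast hx b)
    _ = 2 ^ n - 1 := by
        rw [Fin.sum_univ_eq_sum_range (fun i => (2 : ℝ) ^ i), geom_sum_eq (by norm_num)]
        norm_num
    _ < 2 ^ n := sub_one_lt _

theorem truncated_bits_respect_limit_general
    (a L : ℝ) (ha : 0 < a)
    (M : ℕ)
    (h1 : 1 ≤ L * M / a)
    (n : ℕ) (hn : (n : ℤ) = ⌊Real.logb 2 (L * M / a)⌋) :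
    ∀ x : Fin n → ℕ, (∀ b, x b ≤ 1) →
      ((∑ b : Fin n, (2 : ℝ) ^ (b : ℕ) * x b) / M) * a ≤ L := by
  intro x hx
  have hM : (0 : ℝ) < M := Nat.cast_pos.mpr <| Nat.pos_of_ne_zero fun h => by norm_num [h] at h1
  have hsum : ∑ b : Fin n, (2 : ℝ) ^ (b : ℕ) * x b ≤ L * M / a :=
    (sum_two_pow_mul_lt_two_pow_of_le_one x hx).le.trans
      (two_pow_le_of_natCast_eq_floor_logb (one_pos.trans_le h1) hn)
  rw [div_mul_eq_mul_div, div_le_iff₀ hM, ← le_div_iff₀ ha]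
  exact hsum

/-- **Structural enforcement of one-to-one limit constraints by bitstring
truncation.**  Let `a > 0` be the available quantity of an asset, `L > 0` the
allocation limit, `B ≥ 1` the full bitstring length, `M = 2^B − 1`, and suppose
`L·M/a ≥ 1`.  If the bitstring representing the allocation is truncated to
`n = ⌊log₂(L·M/a)⌋` bits, then for every assignment `x ∈ {0,1}^n` of the bits
the allocated quantity `((Σ_{b=1}^n 2^{b−1} x_b)/M)·a` never exceeds `L`. -/
theorem truncated_bits_respect_limit
    (a L : ℝ) (ha : 0 < a) (hL : 0 < L)
    (B : ℕ) (hB : 1 ≤ B) (M : ℕ) (hM : M = 2 ^ B - 1)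
    (h1 : 1 ≤ L * M / a)
    (n : ℕ) (hn : (n : ℤ) = ⌊Real.logb 2 (L * M / a)⌋) :
    ∀ x : Fin n → ℕ, (∀ b, x b ≤ 1) →
      ((∑ b : Fin n, (2 : ℝ) ^ (b : ℕ) * x b) / M) * a ≤ L :=
  truncated_bits_respect_limit_general a L ha M h1 n hn
end
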